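/- There exist ε > 0 and R₀ > 1/ε¹⁰ such that for all R > R₀ and every w ∈ V⁻ there is a constant c = c(w) > 1 with |xₙ| ≥ c^{2ⁿ} for all n ≥ 0, where Hⁿ(w) = (xₙ,yₙ,zₙ); in particular ‖Hⁿ(w)‖ → ∞ at the super-exponential rate (const)^{2ⁿ} for every w ∈ V⁻. -/

import Mathlib

open Complex Filter Topology

/-- The quadratic automorphism `H(x,y,z) = (xy + az, x² + by, x)` of `ℂ³`. -/
noncomputable def H (a b : ℂ) (w : ℂ × ℂ × ℂ) : ℂ × ℂ × ℂ :=
  (w.1 * w.2.1 + a * w.2.2, w.1 ^ 2 + b * w.2.1, w.1)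

/-- `V⁻ = {(x,y,z) : |xy| > max{R, 2|az|, |x|^{3/2}, (1/ε)|y|^{3/2}}}`. -/
noncomputable def Vminus (a : ℂ) (ε R : ℝ) : Set (ℂ × ℂ × ℂ) :=
  {w | ‖w.1 * w.2.1‖ >
    max R (max (2 * ‖a * w.2.2‖)
      (max (‖w.1‖ ^ ((3 : ℝ) / 2))
        ((1 / ε) * ‖w.2.1‖ ^ ((3 : ℝ) / 2))))}

/-- `U⁺ = ⋃_{n≥0} H⁻ⁿ(V⁻)`, i.e. the points whose forward orbit meets `V⁻`. -/
noncomputable def Uplus (a b : ℂ) (ε R : ℝ) : Set (ℂ × ℂ × ℂ) :=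
  ⋃ n : ℕ, (H a b)^[n] ⁻¹' Vminus a ε R

/-- `K⁺ = ℂ³ \ U⁺`. -/
noncomputable def Kplus (a b : ℂ) (ε R : ℝ) : Set (ℂ × ℂ × ℂ) :=
  (Uplus a b ε R)ᶜ

/-- `Mₙ = max{R, 2|azₙ|, |xₙ|^{3/2}, (1/ε)|yₙ|^{3/2}}` where `Hⁿ(w) = (xₙ,yₙ,zₙ)`. -/
noncomputable def Mseq (a b : ℂ) (ε R : ℝ) (w : ℂ × ℂ × ℂ) (n : ℕ) : ℝ :=
  max R (max (2 * ‖a * ((H a b)^[n] w).2.2‖)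
    (max (‖((H a b)^[n] w).1‖ ^ ((3 : ℝ) / 2))
      ((1 / ε) * ‖((H a b)^[n] w).2.1‖ ^ ((3 : ℝ) / 2))))

/-!
On `V⁻` the terms `xy` and `x²` dominate `az` and `by`, so one step of `H` sends
`(|x|, |y|)` to roughly `(|x||y|, |x|²)`; the inequalities defining `V⁻` propagate
under this, so `V⁻` is forward invariant. Chaining the two estimates gives
`|xₙ₊₂| ≥ |xₙ₊₁| |xₙ|² / 4`, i.e. `uₙ = |xₙ| / 2` satisfies `uₙ₊₂ ≥ uₙ₊₁ uₙ²`, which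
forces `uₙ ≥ c^{2ⁿ}` with `c = min (u₀, √u₁)`.
-/

theorem pow_two_pow_le_of_mul_sq_le {α : Type*} [CommSemiring α] [PartialOrder α]
    [IsOrderedRing α] {u : ℕ → α} {c : α} (hc : 0 ≤ c) (h₀ : c ≤ u 0) (h₁ : c ^ 2 ≤ u 1)
    (hu : ∀ n, u (n + 1) * u n ^ 2 ≤ u (n + 2)) (n : ℕ) : c ^ 2 ^ n ≤ u n := by
  suffices ∀ n, c ^ 2 ^ n ≤ u n ∧ c ^ 2 ^ (n + 1) ≤ u (n + 1) from (this n).1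
  intro n
  induction n with
  | zero => exact ⟨by simpa using h₀, by simpa using h₁⟩
  | succ n ih =>
    refine ⟨ih.2, ?_⟩
    calc c ^ 2 ^ (n + 2) = c ^ 2 ^ (n + 1) * (c ^ 2 ^ n) ^ 2 := by ring
      _ ≤ u (n + 1) * u n ^ 2 :=
        mul_le_mul ih.2 (pow_le_pow_left₀ (by positivity) ih.1 2) (by positivity)
          ((by positivity : (0 : α) ≤ c ^ 2 ^ (n + 1)).trans ih.2)
      _ ≤ u (n + 2) := hu n

theorem exists_one_lt_pow_two_pow_le {x : ℕ → ℝ} (h₀ : 2 < x 0) (h₁ : 2 < x 1)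
    (hx : ∀ n, x (n + 1) * x n ^ 2 / 4 ≤ x (n + 2)) : ∃ c > 1, ∀ n, c ^ 2 ^ n ≤ x n := by
  have hu : ∀ n, x (n + 1) / 2 * (x n / 2) ^ 2 ≤ x (n + 2) / 2 := fun n => by
    linarith [hx n]
  refine ⟨min (x 0 / 2) √(x 1 / 2), lt_min (by linarith) ?_, fun n => ?_⟩
  · exact Real.lt_sqrt_of_sq_lt (by linarith)
  have hc := pow_two_pow_le_of_mul_sq_le (u := fun n => x n / 2)
    (le_min (by linarith) (Real.sqrt_nonneg _)) (min_le_left _ _)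
    ((pow_le_pow_left₀ (by positivity) (min_le_right _ _) 2).trans
      (Real.sq_sqrt (by linarith)).le) hu n
  linarith [hc.trans' (by positivity : 0 ≤ min (x 0 / 2) √(x 1 / 2) ^ 2 ^ n)]

theorem norm_add_bounds_of_norm_le_half {E : Type*} [SeminormedAddGroup E] {u v : E}
    (h : ‖v‖ ≤ ‖u‖ / 2) : ‖u‖ / 2 ≤ ‖u + v‖ ∧ ‖u + v‖ ≤ 3 / 2 * ‖u‖ :=
  ⟨by linarith [norm_le_add_norm_add u v], by linarith [norm_add_le u v]⟩

theorem rpow_three_halves_lt_mul_iff {p q : ℝ} (hp : 0 < p) (hq : 0 ≤ q) :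
    p ^ (3 / 2 : ℝ) < p * q ↔ p < q ^ 2 := by
  rw [show (3 / 2 : ℝ) = 1 + 1 / 2 by norm_num, Real.rpow_add hp, Real.rpow_one,
    ← Real.sqrt_eq_rpow, mul_lt_mul_iff_right₀ hp, Real.sqrt_lt hp.le hq]

section Vminus

variable {a b : ℂ} {ε R : ℝ} {w : ℂ × ℂ × ℂ}

theorem mem_Vminus_iff (hε : 0 < ε) :
    w ∈ Vminus a ε R ↔ R < ‖w.1‖ * ‖w.2.1‖ ∧ 2 * (‖a‖ * ‖w.2.2‖) < ‖w.1‖ * ‖w.2.1‖ ∧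
      ‖w.1‖ < ‖w.2.1‖ ^ 2 ∧ ‖w.2.1‖ < (ε * ‖w.1‖) ^ 2 := by
  simp only [Vminus, Set.mem_ofPred_eq, norm_mul, gt_iff_lt, max_lt_iff]
  refine and_congr_right fun _ => and_congr_right fun h => ?_
  have hxy : 0 < ‖w.1‖ * ‖w.2.1‖ := lt_of_le_of_lt (by positivity) h
  have hx : 0 < ‖w.1‖ := pos_of_mul_pos_left hxy (norm_nonneg _)
  have hy : 0 < ‖w.2.1‖ := pos_of_mul_pos_right hxy (norm_nonneg _)
  rw [rpow_three_halves_lt_mul_iff hx hy.le, one_div, inv_mul_lt_iff₀ hε,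
    show ε * (‖w.1‖ * ‖w.2.1‖) = ‖w.2.1‖ * (ε * ‖w.1‖) by ring,
    rpow_three_halves_lt_mul_iff hy (by positivity)]

theorem one_lt_pow_four_mul_norm_fst (hε : 0 < ε) (hR : 1 / ε ^ 10 < R)
    (hw : w ∈ Vminus a ε R) : 1 < ε ^ 4 * ‖w.1‖ := by
  obtain ⟨hxy, -, -, hy⟩ := (mem_Vminus_iff hε).1 hw
  have hR' : 1 < ε ^ 10 * R := by rwa [div_lt_iff₀' (by positivity)] at hR
  have hRx : R < ε ^ 2 * ‖w.1‖ ^ 3 := by nlinarith [norm_nonneg w.1]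
  have : 1 < (ε ^ 4 * ‖w.1‖) ^ 3 := by nlinarith [pow_pos hε 10]
  exact (one_lt_pow_iff_of_nonneg (by positivity) (by norm_num)).1 this

theorem lt_norm_fst_of_mem_Vminus (hε : 0 < ε) (hε4 : ε ≤ 1 / 4) (hR : 1 / ε ^ 10 < R)
    (hw : w ∈ Vminus a ε R) : 256 < ‖w.1‖ := by
  have := one_lt_pow_four_mul_norm_fst hε hR hw
  nlinarith [pow_le_pow_left₀ hε.le hε4 4, norm_nonneg w.1]

theorem norm_H_bounds (hε : 0 < ε) (hbε : ‖b‖ * ε ^ 2 ≤ 1 / 2) (hw : w ∈ Vminus a ε R) :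
    (‖w.1‖ * ‖w.2.1‖ / 2 ≤ ‖(H a b w).1‖ ∧ ‖(H a b w).1‖ ≤ 3 / 2 * (‖w.1‖ * ‖w.2.1‖)) ∧
      (‖w.1‖ ^ 2 / 2 ≤ ‖(H a b w).2.1‖ ∧ ‖(H a b w).2.1‖ ≤ 3 / 2 * ‖w.1‖ ^ 2) := by
  obtain ⟨-, haz, -, hy⟩ := (mem_Vminus_iff hε).1 hw
  have hby : ‖b‖ * ‖w.2.1‖ ≤ ‖w.1‖ ^ 2 / 2 := by
    nlinarith [mul_le_mul_of_nonneg_left hy.le (norm_nonneg b),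
      mul_le_mul_of_nonneg_right hbε (sq_nonneg ‖w.1‖)]
  have h₁ := norm_add_bounds_of_norm_le_half (u := w.1 * w.2.1) (v := a * w.2.2)
    (by rw [norm_mul, norm_mul]; linarith)
  have h₂ := norm_add_bounds_of_norm_le_half (u := w.1 ^ 2) (v := b * w.2.1)
    (by rw [norm_mul, norm_pow]; linarith)
  rw [norm_mul] at h₁
  rw [norm_pow] at h₂
  exact ⟨h₁, h₂⟩

theorem mapsTo_H_Vminus (hε : 0 < ε) (hε4 : ε ≤ 1 / 4) (hbε : ‖b‖ * ε ^ 2 ≤ 1 / 2)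
    (hR : 1 / ε ^ 10 < R) (haR : 8 * ‖a‖ ≤ R) :
    Set.MapsTo (H a b) (Vminus a ε R) (Vminus a ε R) := by
  intro w hw
  have hlarge := one_lt_pow_four_mul_norm_fst hε hR hw
  have hX := lt_norm_fst_of_mem_Vminus hε hε4 hR hw
  obtain ⟨⟨hx₁, hx₂⟩, hy₁, hy₂⟩ := norm_H_bounds hε hbε hw
  obtain ⟨hRxy, -, hxy, hyx⟩ := (mem_Vminus_iff hε).1 hw
  rw [mem_Vminus_iff hε, show (H a b w).2.2 = w.1 from rfl]
  set X := ‖w.1‖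
  set Y := ‖w.2.1‖
  set X' := ‖(H a b w).1‖
  set Y' := ‖(H a b w).2.1‖
  have hε2 : ε ^ 2 ≤ 1 / 16 := by nlinarith
  have hεX : 16 < ε ^ 2 * X := by nlinarith
  have hprod : X * Y * X ^ 2 / 4 ≤ X' * Y' := by
    have := mul_le_mul hx₁ hy₁ (by positivity) (by positivity)
    linarith
  have hXY : R * X ^ 2 / 4 < X * Y * X ^ 2 / 4 := by gcongr
  have hR0 : 0 < R := lt_of_le_of_lt (by positivity) hR
  have hRX : R ≤ R * X ^ 2 / 4 := by
    nlinarith [mul_le_mul_of_nonneg_left (by nlinarith : 1 ≤ X ^ 2 / 4) hR0.le]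
  have haX : 2 * (‖a‖ * X) ≤ R * X ^ 2 / 4 := by
    nlinarith [mul_le_mul_of_nonneg_right haR (sq_nonneg X),
      mul_le_mul_of_nonneg_left (by nlinarith : X ≤ X ^ 2) (norm_nonneg a)]
  refine ⟨by linarith, by linarith, ?_, ?_⟩
  · have : X ^ 4 / 4 ≤ Y' ^ 2 := by nlinarith
    nlinarith [mul_lt_mul_of_pos_left hyx (by positivity : (0 : ℝ) < X)]
  · have : (ε * (X * Y / 2)) ^ 2 ≤ (ε * X') ^ 2 := by gcongr
    nlinarith [mul_lt_mul_of_pos_left hxy (by positivity : (0 : ℝ) < ε ^ 2 * X ^ 2)]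

theorem norm_fst_H_H_ge (hε : 0 < ε) (hε4 : ε ≤ 1 / 4) (hbε : ‖b‖ * ε ^ 2 ≤ 1 / 2)
    (hR : 1 / ε ^ 10 < R) (haR : 8 * ‖a‖ ≤ R) (hw : w ∈ Vminus a ε R) :
    ‖(H a b w).1‖ * ‖w.1‖ ^ 2 / 4 ≤ ‖(H a b (H a b w)).1‖ := by
  have hx := (norm_H_bounds hε hbε (mapsTo_H_Vminus hε hε4 hbε hR haR hw)).1.1
  have hy := (norm_H_bounds hε hbε hw).2.1
  nlinarith [mul_le_mul_of_nonneg_left hy (norm_nonneg (H a b w).1)]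

end Vminus

theorem stmt8 (a b : ℂ) :
    ∃ ε > (0 : ℝ), ∃ R₀ > 1 / ε ^ 10, ∀ R > R₀, ∀ w ∈ Vminus a ε R,
      ∃ c > (1 : ℝ), ∀ n : ℕ,
        c ^ (2 ^ n) ≤ ‖((H a b)^[n] w).1‖ := by
  set ε : ℝ := 1 / (4 + 4 * ‖b‖) with hε_def
  have hε : 0 < ε := by positivity
  have hε4 : ε ≤ 1 / 4 := by
    rw [hε_def, div_le_div_iff₀ (by positivity) (by norm_num)]
    linarith [norm_nonneg b]
  have hbε : ‖b‖ * ε ^ 2 ≤ 1 / 2 := by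
    have : (4 + 4 * ‖b‖) * ε = 1 := by rw [hε_def]; field_simp
    nlinarith [norm_nonneg b]
  refine ⟨ε, hε, 1 / ε ^ 10 + 8 * ‖a‖ + 1, by linarith [norm_nonneg a], fun R hR w hw => ?_⟩
  have hR' : 1 / ε ^ 10 < R := by linarith [norm_nonneg a]
  have haR : 8 * ‖a‖ ≤ R := by linarith [(by positivity : 0 < 1 / ε ^ 10)]
  have horbit (n : ℕ) : (H a b)^[n] w ∈ Vminus a ε R :=
    (mapsTo_H_Vminus hε hε4 hbε hR' haR).iterate n hw
  refine exists_one_lt_pow_two_pow_le (x := fun n => ‖((H a b)^[n] w).1‖)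
    (by linarith [lt_norm_fst_of_mem_Vminus hε hε4 hR' (horbit 0)])
    (by linarith [lt_norm_fst_of_mem_Vminus hε hε4 hR' (horbit 1)]) fun n => ?_
  simpa only [Function.iterate_succ_apply'] using
    norm_fst_H_H_ge hε hε4 hbε hR' haR (horbit n)
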